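/- Suppose the dispersion and survival matrices satisfy D S = S. Then the alternative net reproductive number satisfies R̂₀ = max_{i ∈ {1,…,n}} R₀^i, and the newborn submatrix of the next-generation matrix is given entrywise by N̄_{ij} = d_1^{i,j} · R₀^j for all i,j ∈ {1,…,n}, where R₀^j := (N^j)_{11} with N^j := F^j (I − S^j)^{-1}. -/

import Mathlib

/-!
Since `D S = S`, the matrix `I - D S = I - S` is block diagonal with blocks `I - Sʲ`, so
`N = D · diag (Nʲ)` and `N_{(k,i),(k',j)} = d_k^{i,j} (Nʲ)_{k k'}`. Each `Nʲ` vanishes outside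
its first row and is nonnegative (`I - Sʲ` is a lower triangular Z-matrix with positive
diagonal), and the columns of `D` sum to one; hence for a newborn vector `x ≥ 0` one gets
`‖N x‖ = ∑ⱼ R₀ʲ xⱼ` with `R₀ʲ = (Nʲ)₁₁`, a linear function on the simplex whose maximum is
`maxⱼ R₀ʲ`.
-/

open Matrix BigOperators

/-- Spectral radius of a real square matrix: the maximum modulus of its complex
eigenvalues (elements of the spectrum of the matrix viewed over `ℂ`). -/
noncomputable def specRad {ι : Type*} [Fintype ι] [DecidableEq ι]
    (M : Matrix ι ι ℝ) : ℝ :=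
  sSup {r : ℝ | ∃ μ : ℂ, μ ∈ spectrum ℂ (M.map Complex.ofReal) ∧ r = ‖μ‖}

/-- The induced `L¹` operator norm of a real matrix: the maximum absolute column sum. -/
noncomputable def colNorm {ι : Type*} [Fintype ι] (M : Matrix ι ι ℝ) : ℝ :=
  ⨆ q, ∑ p, |M p q|

/-- Local fecundity matrix: first row `(f 0, …, f (m-1))`, other rows zero. -/
def localF (m : ℕ) (f : Fin m → ℝ) : Matrix (Fin m) (Fin m) ℝ :=
  Matrix.of fun k' k => if (k' : ℕ) = 0 then f k else 0

/-- Local survival matrix: diagonal entries `sd k`, subdiagonal entries `ss k`,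
all other entries zero. -/
def localS (m : ℕ) (sd ss : Fin m → ℝ) : Matrix (Fin m) (Fin m) ℝ :=
  Matrix.of fun k' k =>
    if k' = k then sd k else if (k' : ℕ) = (k : ℕ) + 1 then ss k else 0

/-- Global (block-diagonal) fecundity matrix `F = ⊕ᵢ Fⁱ`, indexed by
(stage, patch) pairs. -/
def fecMat (m n : ℕ) (f : Fin m → Fin n → ℝ) :
    Matrix (Fin m × Fin n) (Fin m × Fin n) ℝ :=
  Matrix.of fun p q =>
    if p.2 = q.2 then localF m (fun k => f k q.2) p.1 q.1 else 0

/-- Global (block-diagonal) survival matrix `S = ⊕ᵢ Sⁱ`. -/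
def survMat (m n : ℕ) (sd ss : Fin m → Fin n → ℝ) :
    Matrix (Fin m × Fin n) (Fin m × Fin n) ℝ :=
  Matrix.of fun p q =>
    if p.2 = q.2 then localS m (fun k => sd k q.2) (fun k => ss k q.2) p.1 q.1 else 0

/-- Global dispersion matrix: the `(i,j)` patch block is `diag (d 0 i j, …, d (m-1) i j)`. -/
def dispMat (m n : ℕ) (d : Fin m → Fin n → Fin n → ℝ) :
    Matrix (Fin m × Fin n) (Fin m × Fin n) ℝ :=
  Matrix.of fun p q => if p.1 = q.1 then d q.1 p.2 q.2 else 0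

/-- Next-generation matrix `N = D F (I - D S)⁻¹`. -/
noncomputable def nextGen (m n : ℕ) (f : Fin m → Fin n → ℝ)
    (sd ss : Fin m → Fin n → ℝ) (d : Fin m → Fin n → Fin n → ℝ) :
    Matrix (Fin m × Fin n) (Fin m × Fin n) ℝ :=
  dispMat m n d * fecMat m n f * (1 - dispMat m n d * survMat m n sd ss)⁻¹

/-- Partial next-generation matrix `W = F (I - D S)⁻¹`. -/
noncomputable def partGen (m n : ℕ) (f : Fin m → Fin n → ℝ)
    (sd ss : Fin m → Fin n → ℝ) (d : Fin m → Fin n → Fin n → ℝ) :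
    Matrix (Fin m × Fin n) (Fin m × Fin n) ℝ :=
  fecMat m n f * (1 - dispMat m n d * survMat m n sd ss)⁻¹

/-- Newborn submatrix: keep only the rows and columns with stage index `0`
(the newborn indices). -/
def newbornSub {m n : ℕ} (hm : 0 < m)
    (B : Matrix (Fin m × Fin n) (Fin m × Fin n) ℝ) : Matrix (Fin n) (Fin n) ℝ :=
  Matrix.of fun i j => B (⟨0, hm⟩, i) (⟨0, hm⟩, j)

/-- The alternative net reproductive number `R̂₀ = max_{x ∈ 𝒳} ‖N x‖`, where `𝒳`
is the set of nonnegative `L¹`-unit vectors supported on the newborn indices. -/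
noncomputable def altR0 (m n : ℕ)
    (N : Matrix (Fin m × Fin n) (Fin m × Fin n) ℝ) : ℝ :=
  sSup {r : ℝ | ∃ x : Fin m × Fin n → ℝ, (∀ p, 0 ≤ x p) ∧ (∑ p, |x p|) = 1 ∧
    (∀ p : Fin m × Fin n, (p.1 : ℕ) ≠ 0 → x p = 0) ∧ r = ∑ p, |N.mulVec x p|}

open Finset

theorem Matrix.IsLowerTriangular.nonneg_of_mul_eq_one {ι R : Type*} [Fintype ι] [LinearOrder ι]
    [DecidableEq ι] [CommRing R] [LinearOrder R] [IsStrictOrderedRing R] {A T : Matrix ι ι R}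
    (hA : A.IsLowerTriangular) (hdiag : ∀ i, 0 < A i i) (hoff : ∀ i j, i ≠ j → A i j ≤ 0)
    (hAT : A * T = 1) (i j : ι) : 0 ≤ T i j := by
  -- row `i` of `A * T = 1` determines `T i j` from the rows above it
  induction i using WellFoundedLT.induction with
  | _ i ih =>
  have hrow : A i i * T i j = (1 : Matrix ι ι R) i j - ∑ l ∈ univ.erase i, A i l * T l j := by
    rw [← hAT, mul_apply, ← add_sum_erase _ _ (mem_univ i)]
    ring
  have hrest : ∑ l ∈ univ.erase i, A i l * T l j ≤ 0 := by
    refine sum_nonpos fun l hl => ?_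
    rcases (ne_of_mem_erase hl).lt_or_gt with hli | hil
    · exact mul_nonpos_of_nonpos_of_nonneg (hoff i l hli.ne') (ih l hli)
    · rw [hA (show OrderDual.toDual l < OrderDual.toDual i from hil), zero_mul]
  have hone : (0 : R) ≤ (1 : Matrix ι ι R) i j := by
    rw [one_apply]
    split_ifs <;> norm_num
  exact (mul_nonneg_iff_of_pos_left (hdiag i)).mp (by rw [hrow]; linarith)

section Local

variable {m : ℕ}

noncomputable def localNextGen (m : ℕ) (f sd ss : Fin m → ℝ) : Matrix (Fin m) (Fin m) ℝ :=
  localF m f * (1 - localS m sd ss)⁻¹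

theorem localS_isLowerTriangular (sd ss : Fin m → ℝ) : (localS m sd ss).IsLowerTriangular := by
  intro k' k h
  have h : (k' : ℕ) < k := h
  simp only [localS, of_apply]
  rw [if_neg (by omega), if_neg (by omega)]

theorem one_sub_localS_isLowerTriangular (sd ss : Fin m → ℝ) :
    (1 - localS m sd ss).IsLowerTriangular :=
  blockTriangular_one.sub (localS_isLowerTriangular sd ss)

theorem one_sub_localS_apply_self (sd ss : Fin m → ℝ) (k : Fin m) :
    (1 - localS m sd ss) k k = 1 - sd k := by
  simp [localS]

theorem isUnit_det_one_sub_localS {sd : Fin m → ℝ} (hsd : ∀ k, sd k < 1) (ss : Fin m → ℝ) :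
    IsUnit (1 - localS m sd ss).det := by
  rw [det_of_isLowerTriangular _ (one_sub_localS_isLowerTriangular sd ss)]
  refine (prod_pos fun k _ => ?_).ne'.isUnit
  rw [one_sub_localS_apply_self]
  linarith [hsd k]

theorem inv_one_sub_localS_nonneg {sd ss : Fin m → ℝ} (hsd : ∀ k, sd k < 1)
    (hss : ∀ k, 0 ≤ ss k) (k' k : Fin m) : 0 ≤ (1 - localS m sd ss)⁻¹ k' k := by
  refine (one_sub_localS_isLowerTriangular sd ss).nonneg_of_mul_eq_one (fun k => ?_)
    (fun k' k hne => ?_) (mul_nonsing_inv _ (isUnit_det_one_sub_localS hsd ss)) k' k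
  · rw [one_sub_localS_apply_self]
    linarith [hsd k]
  · rw [Matrix.sub_apply, one_apply_ne hne, zero_sub, neg_nonpos]
    simp only [localS, of_apply, if_neg hne]
    split_ifs
    exacts [hss k, le_rfl]

theorem localNextGen_apply_of_ne_zero (f sd ss : Fin m → ℝ) {k : Fin m} (hk : (k : ℕ) ≠ 0)
    (k' : Fin m) : localNextGen m f sd ss k k' = 0 := by
  simp [localNextGen, mul_apply, localF, hk]

theorem localNextGen_nonneg {f sd ss : Fin m → ℝ} (hf : ∀ k, 0 ≤ f k) (hsd : ∀ k, sd k < 1)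
    (hss : ∀ k, 0 ≤ ss k) (k k' : Fin m) : 0 ≤ localNextGen m f sd ss k k' := by
  rw [localNextGen, mul_apply]
  refine sum_nonneg fun l _ => mul_nonneg ?_ (inv_one_sub_localS_nonneg hsd hss l k')
  simp only [localF, of_apply]
  split_ifs
  exacts [hf l, le_rfl]

end Local

section Global

variable {m n : ℕ}

theorem survMat_eq_blockDiagonal (sd ss : Fin m → Fin n → ℝ) :
    survMat m n sd ss = blockDiagonal fun i => localS m (sd · i) (ss · i) := by
  ext ⟨k, i⟩ ⟨k', j⟩
  simp only [survMat, of_apply, blockDiagonal_apply]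
  split_ifs with h
  · rw [h]
  · rfl

theorem fecMat_eq_blockDiagonal (f : Fin m → Fin n → ℝ) :
    fecMat m n f = blockDiagonal fun i => localF m (f · i) := by
  ext ⟨k, i⟩ ⟨k', j⟩
  simp only [fecMat, of_apply, blockDiagonal_apply]
  split_ifs with h
  · rw [h]
  · rfl

theorem dispMat_mul_blockDiagonal_apply (d : Fin m → Fin n → Fin n → ℝ)
    (W : Fin n → Matrix (Fin m) (Fin m) ℝ) (k : Fin m) (i : Fin n) (k' : Fin m) (j : Fin n) :
    (dispMat m n d * blockDiagonal W) (k, i) (k', j) = d k i j * W j k k' := by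
  rw [mul_apply, Fintype.sum_prod_type, sum_eq_single k, sum_eq_single j]
  · simp [dispMat, blockDiagonal_apply]
  all_goals intros; simp_all [dispMat, blockDiagonal_apply, eq_comm]

theorem inv_one_sub_survMat {sd : Fin m → Fin n → ℝ} (hsd : ∀ k i, sd k i < 1)
    (ss : Fin m → Fin n → ℝ) :
    (1 - survMat m n sd ss)⁻¹ = blockDiagonal fun i => (1 - localS m (sd · i) (ss · i))⁻¹ := by
  refine inv_eq_right_inv ?_
  rw [survMat_eq_blockDiagonal, ← blockDiagonal_one, ← blockDiagonal_sub, ← blockDiagonal_mul]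
  exact congrArg blockDiagonal <| funext fun i =>
    mul_nonsing_inv _ (isUnit_det_one_sub_localS (hsd · i) _)

theorem nextGen_apply {f : Fin m → Fin n → ℝ} {sd ss : Fin m → Fin n → ℝ}
    {d : Fin m → Fin n → Fin n → ℝ} (hsd : ∀ k i, sd k i < 1)
    (hDS : dispMat m n d * survMat m n sd ss = survMat m n sd ss)
    (k : Fin m) (i : Fin n) (k' : Fin m) (j : Fin n) :
    nextGen m n f sd ss d (k, i) (k', j) =
      d k i j * localNextGen m (f · j) (sd · j) (ss · j) k k' := by
  rw [nextGen, hDS, inv_one_sub_survMat hsd, fecMat_eq_blockDiagonal, Matrix.mul_assoc,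
    ← blockDiagonal_mul, dispMat_mul_blockDiagonal_apply]
  rfl

end Global

theorem sSup_dotProduct_image_stdSimplex {ι : Type*} [Fintype ι] (c : ι → ℝ) :
    sSup ((c ⬝ᵥ ·) '' stdSimplex ℝ ι) = ⨆ j, c j := by
  rcases isEmpty_or_nonempty ι with hι | hι
  · have : stdSimplex ℝ ι = ∅ := Set.eq_empty_of_forall_notMem fun y hy => by
      simpa using hy.2
    rw [this, Set.image_empty, Real.sSup_empty, Real.iSup_of_isEmpty]
  classical
  obtain ⟨j₀, hj₀⟩ := Finite.exists_max c
  have hgreatest : IsGreatest ((c ⬝ᵥ ·) '' stdSimplex ℝ ι) (c j₀) := by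
    refine ⟨⟨Pi.single j₀ 1, single_mem_stdSimplex ℝ j₀, by simp⟩, ?_⟩
    rintro _ ⟨y, ⟨hy0, hy1⟩, rfl⟩
    calc c ⬝ᵥ y ≤ ∑ j, c j₀ * y j :=
          sum_le_sum fun j _ => mul_le_mul_of_nonneg_right (hj₀ j) (hy0 j)
      _ = c j₀ := by rw [← mul_sum, hy1, mul_one]
  rw [hgreatest.csSup_eq]
  exact (le_antisymm (ciSup_le hj₀) (le_ciSup (Finite.bddAbove_range c) j₀)).symm

section Newborn

variable {m n : ℕ}

def newbornVec (m : ℕ) {n : ℕ} (y : Fin n → ℝ) : Fin m × Fin n → ℝ :=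
  fun p => if (p.1 : ℕ) = 0 then y p.2 else 0

theorem sum_newbornVec (hm : 0 < m) (y : Fin n → ℝ) :
    ∑ p, newbornVec m y p = ∑ j, y j := by
  rw [Fintype.sum_prod_type, sum_eq_single ⟨0, hm⟩]
  · simp [newbornVec]
  · intro k _ hk
    simp [newbornVec, Fin.ext_iff.not.mp hk]
  · simp

theorem mulVec_newbornVec (hm : 0 < m) (M : Matrix (Fin m × Fin n) (Fin m × Fin n) ℝ)
    (y : Fin n → ℝ) (p : Fin m × Fin n) :
    (M *ᵥ newbornVec m y) p = ∑ j, M p (⟨0, hm⟩, j) * y j := by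
  rw [mulVec, dotProduct, Fintype.sum_prod_type, sum_eq_single ⟨0, hm⟩]
  · simp [newbornVec]
  · intro k _ hk
    simp [newbornVec, Fin.ext_iff.not.mp hk]
  · simp

theorem altR0_eq_sSup_image (hm : 0 < m) (N : Matrix (Fin m × Fin n) (Fin m × Fin n) ℝ) :
    altR0 m n N = sSup ((fun y => ∑ p, |(N *ᵥ newbornVec m y) p|) '' stdSimplex ℝ (Fin n)) := by
  rw [altR0]
  congr 1
  ext r
  constructor
  · rintro ⟨x, hx0, hx1, hxs, rfl⟩
    have hx : newbornVec m (fun j => x (⟨0, hm⟩, j)) = x := by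
      funext ⟨k, j⟩
      by_cases hk : (k : ℕ) = 0
      · simp [newbornVec, show k = ⟨0, hm⟩ from Fin.ext hk]
      · simp [newbornVec, hk, hxs (k, j) hk]
    refine ⟨fun j => x (⟨0, hm⟩, j), ⟨fun j => hx0 _, ?_⟩, by simp only [hx]⟩
    rw [← sum_newbornVec hm, hx, ← hx1]
    exact sum_congr rfl fun p _ => (abs_of_nonneg (hx0 p)).symm
  · rintro ⟨y, ⟨hy0, hy1⟩, rfl⟩
    have hy0' : ∀ p, 0 ≤ newbornVec m y p := fun p => by
      unfold newbornVec
      split_ifs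
      exacts [hy0 _, le_rfl]
    refine ⟨newbornVec m y, hy0', ?_, fun p hp => if_neg hp, rfl⟩
    rw [← hy1, ← sum_newbornVec hm]
    exact sum_congr rfl fun p _ => abs_of_nonneg (hy0' p)

theorem sum_abs_nextGen_mulVec_newbornVec (hm : 0 < m) {f sd ss : Fin m → Fin n → ℝ}
    {d : Fin m → Fin n → Fin n → ℝ} (hf : ∀ k i, 0 ≤ f k i) (hsd : ∀ k i, sd k i < 1)
    (hss : ∀ k i, 0 ≤ ss k i) (hd0 : ∀ k i j, 0 ≤ d k i j) (hdsum : ∀ k j, ∑ i, d k i j = 1)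
    (hDS : dispMat m n d * survMat m n sd ss = survMat m n sd ss) {y : Fin n → ℝ}
    (hy : ∀ j, 0 ≤ y j) :
    ∑ p, |(nextGen m n f sd ss d *ᵥ newbornVec m y) p| =
      (fun j => localNextGen m (f · j) (sd · j) (ss · j) ⟨0, hm⟩ ⟨0, hm⟩) ⬝ᵥ y := by
  set W := fun j => localNextGen m (f · j) (sd · j) (ss · j)
  have hW : ∀ j k k', 0 ≤ W j k k' := fun j =>
    localNextGen_nonneg (hf · j) (hsd · j) (hss · j)
  have hentry : ∀ k i, (nextGen m n f sd ss d *ᵥ newbornVec m y) (k, i) =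
      ∑ j, d k i j * (W j k ⟨0, hm⟩ * y j) := fun k i => by
    simp only [mulVec_newbornVec hm, nextGen_apply hsd hDS, W, mul_assoc]
  calc ∑ p, |(nextGen m n f sd ss d *ᵥ newbornVec m y) p|
      = ∑ k, ∑ i, ∑ j, d k i j * (W j k ⟨0, hm⟩ * y j) := by
        rw [Fintype.sum_prod_type]
        refine sum_congr rfl fun k _ => sum_congr rfl fun i _ => ?_
        rw [hentry, abs_of_nonneg]
        exact sum_nonneg fun j _ => mul_nonneg (hd0 k i j) (mul_nonneg (hW j k _) (hy j))
    _ = ∑ k, ∑ j, W j k ⟨0, hm⟩ * y j := by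
        refine sum_congr rfl fun k _ => ?_
        rw [sum_comm]
        simp only [← sum_mul, hdsum, one_mul]
    _ = ∑ j, W j ⟨0, hm⟩ ⟨0, hm⟩ * y j := by
        rw [sum_comm]
        exact sum_congr rfl fun j _ => sum_eq_single _ (fun k _ hk => mul_eq_zero_of_left
          (localNextGen_apply_of_ne_zero _ _ _ (Fin.val_ne_iff.mpr hk) _) _) (by simp)

end Newborn

theorem stmt11
    (m n : ℕ) (hm : 2 ≤ m)
    (f : Fin m → Fin n → ℝ) (hf : ∀ k i, 0 ≤ f k i)
    (sd ss : Fin m → Fin n → ℝ)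
    (hss : ∀ k i, 0 ≤ ss k i)
    (hs1 : ∀ (k : Fin m) (i : Fin n),
      sd k i + (if (k : ℕ) + 1 < m then ss k i else 0) < 1)
    (d : Fin m → Fin n → Fin n → ℝ)
    (hd0 : ∀ k i j, 0 ≤ d k i j)
    (hdsum : ∀ k j, ∑ i, d k i j = 1)
    (hDS : dispMat m n d * survMat m n sd ss = survMat m n sd ss) :
    altR0 m n (nextGen m n f sd ss d) =
        (⨆ i : Fin n,
          (localF m (fun k => f k i) *
            (1 - localS m (fun k => sd k i) (fun k => ss k i))⁻¹)
            ⟨0, show 0 < m by omega⟩ ⟨0, show 0 < m by omega⟩) ∧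
      ∀ i j : Fin n,
        newbornSub (show 0 < m by omega) (nextGen m n f sd ss d) i j =
          d ⟨0, show 0 < m by omega⟩ i j *
            (localF m (fun k => f k j) *
              (1 - localS m (fun k => sd k j) (fun k => ss k j))⁻¹)
              ⟨0, show 0 < m by omega⟩ ⟨0, show 0 < m by omega⟩ := by
  have hm0 : 0 < m := by omega
  have hsd1 : ∀ k i, sd k i < 1 := fun k i => by
    have h := hs1 k i
    split_ifs at h <;> linarith [hss k i]
  refine ⟨?_, fun i j => nextGen_apply hsd1 hDS _ _ _ _⟩
  rw [altR0_eq_sSup_image hm0, Set.image_congr fun y hy =>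
    sum_abs_nextGen_mulVec_newbornVec hm0 hf hsd1 hss hd0 hdsum hDS hy.1]
  exact sSup_dotProduct_image_stdSimplex _
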